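/- arXiv:1409.3653 — 4 statements merged into one kernel-verified Lean document; each statement's English description precedes it below -/
import Mathlib

section
/- Fix a subset B ⊆ A and any estimator v̂ (a measurable function of the dataset D^n, of π, and of π_D). Then sup over environments Φ with 0 ≤ r_Φ(a) ≤ R_max and σ²_Φ(a) ≤ σ²(a) of E[(v̂(D^n) − v^π_Φ)²] ≥ P(A_1,…,A_n ∉ B) · (R_max²/4) · π(B)², where π(B) = Σ_{a∈B} π(a) and P(A_1,…,A_n ∉ B) = (1 − Σ_{a∈B} π_D(a))^n. -/
open MeasureTheory ProbabilityTheory ENNReal Filter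

noncomputable section

namespace OffPolicy

variable {K : ℕ}

/-- `π` is a probability mass function on the action set. -/
def IsPolicy (π : Fin K → ℝ) : Prop := (∀ a, 0 ≤ π a) ∧ ∑ a, π a = 1

/-- A behavior policy: a pmf with everywhere positive probabilities. -/
def IsBehaviorPolicy (πD : Fin K → ℝ) : Prop := (∀ a, 0 < πD a) ∧ ∑ a, πD a = 1

/-- The joint distribution of a single pair `(A, R)` with `A ~ πD` and `R ~ Φ(·|A)`. -/
def jointMeasure (πD : Fin K → ℝ) (Φ : Fin K → ProbabilityMeasure ℝ) :
    Measure (Fin K × ℝ) :=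
  ∑ a : Fin K, (πD a).toNNReal • ((Measure.dirac a).prod (Φ a : Measure ℝ))

instance jointMeasure_finite (πD : Fin K → ℝ) (Φ : Fin K → ProbabilityMeasure ℝ) :
    IsFiniteMeasure (jointMeasure πD Φ) := by
  unfold jointMeasure
  infer_instance

/-- The distribution of the i.i.d. dataset `D^n = ((A_1,R_1),…,(A_n,R_n))`. -/
def dataMeasure (n : ℕ) (πD : Fin K → ℝ) (Φ : Fin K → ProbabilityMeasure ℝ) :
    Measure (Fin n → Fin K × ℝ) :=
  Measure.pi fun _ => jointMeasure πD Φ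

/-- Mean reward `r_Φ(a)` of action `a`. -/
def envMean (Φ : Fin K → ProbabilityMeasure ℝ) (a : Fin K) : ℝ :=
  ∫ x, x ∂(Φ a : Measure ℝ)

/-- Reward variance `σ²_Φ(a)` of action `a`. -/
def envVar (Φ : Fin K → ProbabilityMeasure ℝ) (a : Fin K) : ℝ :=
  ∫ x, (x - envMean Φ a) ^ 2 ∂(Φ a : Measure ℝ)

/-- The value `v^π_Φ = Σ_a π(a) r_Φ(a)` of the target policy. -/
def value (π : Fin K → ℝ) (Φ : Fin K → ProbabilityMeasure ℝ) : ℝ :=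
  ∑ a, π a * envMean Φ a

/-- Mean squared error `E[(v̂(D^n) − v^π_Φ)²]` of an estimator. -/
def mse (n : ℕ) (π πD : Fin K → ℝ) (Φ : Fin K → ProbabilityMeasure ℝ)
    (est : (Fin n → Fin K × ℝ) → ℝ) : ℝ≥0∞ :=
  ∫⁻ d, ENNReal.ofReal ((est d - value π Φ) ^ 2) ∂(dataMeasure n πD Φ)

/-- Environments with square-integrable rewards, means within `[0, Rmax]`,
and variances bounded by `σ2`. -/
def ValidEnv (Rmax : ℝ) (σ2 : Fin K → ℝ) (Φ : Fin K → ProbabilityMeasure ℝ) : Prop :=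
  (∀ a, MemLp (fun x => x) 2 (Φ a : Measure ℝ)) ∧
  (∀ a, 0 ≤ envMean Φ a ∧ envMean Φ a ≤ Rmax) ∧
  (∀ a, envVar Φ a ≤ σ2 a)

/-- Minimax risk `R_n^*(π, πD, Rmax, σ²)`. -/
def minimaxRisk (n : ℕ) (π πD : Fin K → ℝ) (Rmax : ℝ) (σ2 : Fin K → ℝ) : ℝ≥0∞ :=
  ⨅ (est : (Fin n → Fin K × ℝ) → ℝ) (_ : Measurable est),
    ⨆ (Φ : Fin K → ProbabilityMeasure ℝ) (_ : ValidEnv Rmax σ2 Φ), mse n π πD Φ est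

/-- The likelihood ratio estimator. -/
def vLR (n : ℕ) (π πD : Fin K → ℝ) (d : Fin n → Fin K × ℝ) : ℝ :=
  (1 / (n : ℝ)) * ∑ i, (π (d i).1 / πD (d i).1) * (d i).2

/-- `n(a)`: the number of samples of action `a` in the dataset. -/
def cnt (n : ℕ) (d : Fin n → Fin K × ℝ) (a : Fin K) : ℕ :=
  (Finset.univ.filter fun i => (d i).1 = a).card

/-- `r̂(a) = R(a)/n(a)` if `n(a) > 0`, and `0` otherwise (division by zero is zero). -/
def rhat (n : ℕ) (d : Fin n → Fin K × ℝ) (a : Fin K) : ℝ :=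
  if 0 < cnt n d a then
    (∑ i ∈ Finset.univ.filter (fun i => (d i).1 = a), (d i).2) / (cnt n d a : ℝ)
  else 0

/-- The regression estimator. -/
def vReg (n : ℕ) (π : Fin K → ℝ) (d : Fin n → Fin K × ℝ) : ℝ :=
  ∑ a, π a * rhat n d a

/-! Compare the environment with all rewards `0` to the one with deterministic reward `Rmax` on
`B` and `0` elsewhere. Both are valid, their values differ by `Rmax π(B)`, and on the event that
no sampled action lies in `B` they induce the same data distribution. Since
`(x - u)² + (x - v)² ≥ (u - v)² / 2`, the two mean squared errors add up to at least
`(Rmax π(B))² / 2 · (1 - πD(B))ⁿ`, so the larger of them is at least half of that. -/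

theorem ofReal_sq_sub_div_two_mul_le_lintegral_add {α : Type*} [MeasurableSpace α]
    (μ : Measure α) {f : α → ℝ} (hf : Measurable f) (a b : ℝ) :
    ENNReal.ofReal ((a - b) ^ 2 / 2) * μ Set.univ ≤
      ∫⁻ x, ENNReal.ofReal ((f x - a) ^ 2) ∂μ + ∫⁻ x, ENNReal.ofReal ((f x - b) ^ 2) ∂μ := by
  rw [← lintegral_const, ← lintegral_add_left (hf.sub_const a |>.pow_const 2).ennreal_ofReal]
  refine lintegral_mono fun x => ?_
  rw [← ENNReal.ofReal_add (sq_nonneg _) (sq_nonneg _)]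
  exact ENNReal.ofReal_le_ofReal (by nlinarith [sq_nonneg (2 * f x - a - b)])

def actionsIn (n : ℕ) (s : Set (Fin K)) : Set (Fin n → Fin K × ℝ) :=
  Set.univ.pi fun _ => s ×ˢ Set.univ

theorem jointMeasure_prod_univ {πD : Fin K → ℝ} (hπD : ∀ a, 0 ≤ πD a)
    (Φ : Fin K → ProbabilityMeasure ℝ) (s : Finset (Fin K)) :
    jointMeasure πD Φ (↑s ×ˢ Set.univ) = ENNReal.ofReal (∑ a ∈ s, πD a) := by
  classical
  simp only [jointMeasure, Measure.finsetSum_apply, Measure.smul_apply, Measure.prod_prod,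
    measure_univ, mul_one, Measure.dirac_apply, Set.indicator_apply, Finset.mem_coe, mul_ite,
    Pi.one_apply, mul_zero, Finset.sum_ite_mem, Finset.univ_inter, ENNReal.smul_def, smul_eq_mul]
  exact (ENNReal.ofReal_sum_of_nonneg fun a _ => hπD a).symm

theorem jointMeasure_restrict_prod_univ_eq (πD : Fin K → ℝ) {Φ Φ' : Fin K → ProbabilityMeasure ℝ}
    {s : Set (Fin K)} (h : Set.EqOn Φ Φ' s) :
    (jointMeasure πD Φ).restrict (s ×ˢ Set.univ) =
      (jointMeasure πD Φ').restrict (s ×ˢ Set.univ) := by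
  classical
  simp only [jointMeasure, ← Measure.restrictₗ_apply, map_sum]
  refine Finset.sum_congr rfl fun a _ => ?_
  simp only [Measure.restrictₗ_apply, Measure.restrict_smul,
    ← Measure.restrict_prod_eq_prod_univ, restrict_dirac]
  split_ifs with ha
  · rw [h ha]
  · simp

theorem dataMeasure_actionsIn {πD : Fin K → ℝ} (hπD : ∀ a, 0 ≤ πD a) (n : ℕ)
    (Φ : Fin K → ProbabilityMeasure ℝ) (s : Finset (Fin K)) :
    dataMeasure n πD Φ (actionsIn n ↑s) = ENNReal.ofReal ((∑ a ∈ s, πD a) ^ n) := by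
  rw [dataMeasure, actionsIn, Measure.pi_pi, jointMeasure_prod_univ hπD, Finset.prod_const,
    Finset.card_univ, Fintype.card_fin, ENNReal.ofReal_pow (Finset.sum_nonneg fun a _ => hπD a)]

theorem dataMeasure_restrict_actionsIn_eq (n : ℕ) (πD : Fin K → ℝ)
    {Φ Φ' : Fin K → ProbabilityMeasure ℝ} {s : Set (Fin K)} (h : Set.EqOn Φ Φ' s) :
    (dataMeasure n πD Φ).restrict (actionsIn n s) =
      (dataMeasure n πD Φ').restrict (actionsIn n s) := by
  simp only [dataMeasure, actionsIn, Measure.restrict_pi_pi,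
    jointMeasure_restrict_prod_univ_eq πD h]

theorem ofReal_sq_sub_div_two_mul_le_mse_add_mse {n : ℕ} {π πD : Fin K → ℝ}
    {Φ Φ' : Fin K → ProbabilityMeasure ℝ} {E : Set (Fin n → Fin K × ℝ)}
    (hE : (dataMeasure n πD Φ).restrict E = (dataMeasure n πD Φ').restrict E)
    {est : (Fin n → Fin K × ℝ) → ℝ} (hest : Measurable est) :
    ENNReal.ofReal ((value π Φ - value π Φ') ^ 2 / 2) * dataMeasure n πD Φ E ≤
      mse n π πD Φ est + mse n π πD Φ' est := by
  calc _ = ENNReal.ofReal ((value π Φ - value π Φ') ^ 2 / 2) *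
        (dataMeasure n πD Φ).restrict E Set.univ := by rw [Measure.restrict_apply_univ]
    _ ≤ _ := ofReal_sq_sub_div_two_mul_le_lintegral_add _ hest _ _
    _ ≤ _ := add_le_add (setLIntegral_le_lintegral _ _)
      (by rw [hE]; exact setLIntegral_le_lintegral _ _)

def diracEnv (r : Fin K → ℝ) : Fin K → ProbabilityMeasure ℝ :=
  fun a => ⟨Measure.dirac (r a), inferInstance⟩

theorem envMean_diracEnv (r : Fin K → ℝ) (a : Fin K) : envMean (diracEnv r) a = r a := by
  simp [envMean, diracEnv]

theorem envVar_diracEnv (r : Fin K → ℝ) (a : Fin K) : envVar (diracEnv r) a = 0 := by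
  simp [envVar, diracEnv, envMean_diracEnv]

theorem value_diracEnv (π r : Fin K → ℝ) : value π (diracEnv r) = ∑ a, π a * r a := by
  simp [value, envMean_diracEnv]

theorem validEnv_diracEnv {Rmax : ℝ} {σ2 : Fin K → ℝ} (hσ : ∀ a, 0 ≤ σ2 a)
    {r : Fin K → ℝ} (hr : ∀ a, 0 ≤ r a ∧ r a ≤ Rmax) : ValidEnv Rmax σ2 (diracEnv r) := by
  refine ⟨fun a => ?_, fun a => envMean_diracEnv r a ▸ hr a,
    fun a => envVar_diracEnv r a ▸ hσ a⟩
  exact (memLp_const (r a)).ae_eq (ae_dirac_eq (r a) ▸ Filter.eventually_pure.2 rfl)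

theorem sup_mse_lower_bound_general {K : ℕ} (n : ℕ)
    (π πD : Fin K → ℝ) (hπD : IsBehaviorPolicy πD)
    (Rmax : ℝ) (hR : 0 < Rmax) (σ2 : Fin K → ℝ) (hσ : ∀ a, 0 ≤ σ2 a)
    (B : Finset (Fin K))
    (est : (Fin n → Fin K × ℝ) → ℝ) (hest : Measurable est) :
    ENNReal.ofReal ((1 - ∑ a ∈ B, πD a) ^ n * (Rmax ^ 2 / 4) * (∑ a ∈ B, π a) ^ 2) ≤
      ⨆ (Φ : Fin K → ProbabilityMeasure ℝ) (_ : ValidEnv Rmax σ2 Φ),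
        mse n π πD Φ est := by
  classical
  set S := ⨆ (Φ : Fin K → ProbabilityMeasure ℝ) (_ : ValidEnv Rmax σ2 Φ), mse n π πD Φ est
  have hS {r : Fin K → ℝ} (hr : ∀ a, 0 ≤ r a ∧ r a ≤ Rmax) : mse n π πD (diracEnv r) est ≤ S :=
    le_iSup₂_of_le (f := fun Φ _ => mse n π πD Φ est) _ (validEnv_diracEnv hσ hr) le_rfl
  let r : Fin K → ℝ := fun a => if a ∈ B then Rmax else 0
  have hagree : Set.EqOn (diracEnv 0) (diracEnv r) ↑Bᶜ := fun a ha => by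
    simp only [diracEnv, r, if_neg (Finset.mem_compl.1 ha)]
    rfl
  have hgap : value π (diracEnv 0) - value π (diracEnv r) = -(Rmax * ∑ a ∈ B, π a) := by
    simp [value_diracEnv, r, Finset.mul_sum, mul_comm]
  have hprob : dataMeasure n πD (diracEnv 0) (actionsIn n ↑Bᶜ) =
      ENNReal.ofReal ((1 - ∑ a ∈ B, πD a) ^ n) := by
    rw [dataMeasure_actionsIn (fun a => (hπD.1 a).le), ← hπD.2, ← Finset.sum_compl_add_sum B,
      add_sub_cancel_right]
  have key := ofReal_sq_sub_div_two_mul_le_mse_add_mse (π := π)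
    (dataMeasure_restrict_actionsIn_eq n πD hagree) hest
  rw [hgap, hprob, ← ENNReal.ofReal_mul (by positivity)] at key
  refine (ENNReal.mul_le_mul_iff_left two_ne_zero ENNReal.ofNat_ne_top).1 ?_
  calc _ = ENNReal.ofReal ((-(Rmax * ∑ a ∈ B, π a)) ^ 2 / 2 * (1 - ∑ a ∈ B, πD a) ^ n) := by
        rw [← ENNReal.ofReal_ofNat 2, ← ENNReal.ofReal_mul' zero_le_two]
        ring_nf
    _ ≤ S + S := key.trans (add_le_add (hS fun a => ⟨le_rfl, hR.le⟩)
        (hS fun a => by by_cases ha : a ∈ B <;> simp [r, ha, hR.le]))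
    _ = S * 2 := (mul_two S).symm

/-- for any fixed subset `B` of actions and any measurable estimator,
the worst-case MSE over valid environments is at least
`P(A_1,…,A_n ∉ B) · (R_max²/4) · π(B)²`, where `P(A_1,…,A_n ∉ B) = (1 − π_D(B))^n`. -/
theorem sup_mse_lower_bound {K : ℕ} (n : ℕ)
    (π πD : Fin K → ℝ) (hπ : IsPolicy π) (hπD : IsBehaviorPolicy πD)
    (Rmax : ℝ) (hR : 0 < Rmax) (σ2 : Fin K → ℝ) (hσ : ∀ a, 0 ≤ σ2 a)
    (B : Finset (Fin K))
    (est : (Fin n → Fin K × ℝ) → ℝ) (hest : Measurable est) :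
    ENNReal.ofReal ((1 - ∑ a ∈ B, πD a) ^ n * (Rmax ^ 2 / 4) * (∑ a ∈ B, π a) ^ 2) ≤
      ⨆ (Φ : Fin K → ProbabilityMeasure ℝ) (_ : ValidEnv Rmax σ2 Φ),
        mse n π πD Φ est :=
  sup_mse_lower_bound_general n π πD hπD Rmax hR σ2 hσ B est hest

end OffPolicy
end
end

section
/- Assume r_Φ(a) ≥ 0 for all a. Then the regression estimator satisfies MSE(v̂_Reg) ≤ V_{0,n} + (V₁ + V_{3,n})/n, where p_{a,n} = (1 − π_D(a))^n, V_{0,n} = (Σ_a π(a) r_Φ(a) p_{a,n})² + Σ_a π(a)² r_Φ(a)² p_{a,n}(1 − p_{a,n}), V₁ = Σ_a π(a)² σ²_Φ(a)/π_D(a), and V_{3,n} = Σ_a E[ 1{n(a)>0} · n/n(a) − 1/π_D(a) ] · π(a)² σ²_Φ(a). -/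
open MeasureTheory ProbabilityTheory ENNReal Filter

noncomputable section

namespace OffPolicy

variable {K : ℕ}

/-!
Conditionally on the action sequence `t`, the dataset is `mkData t x` with independent rewards
`x i ~ Φ (t i)`, and `v̂_Reg` is the linear statistic `∑ i, π (t i) / n(t i) * x i`. Its conditional
mean squared error is therefore a variance term `∑_{n(a) > 0} π(a)² σ²(a) / n(a)` plus a squared
bias `(∑_{n(a) = 0} π(a) r(a))²`. Averaging over `t`, the variance term equals `(V₁ + V_{3,n}) / n`.
For the bias term, `P(n(a) = n(b) = 0) = (1 - π_D(a) - π_D(b))^n ≤ p_{a,n} p_{b,n}` when `a ≠ b`;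
since the weights `π(a) r(a)` are nonnegative, this negative correlation bounds the cross terms,
and the second moment of the bias is at most `V_{0,n}`.
-/

open scoped NNReal

theorem _root_.MeasureTheory.Measure.pi_sum_smul {ι κ α : Type*} [Fintype ι] [DecidableEq ι]
    [Fintype κ] [MeasurableSpace α] (c : κ → ℝ≥0) (ν : κ → Measure α)
    [∀ k, IsFiniteMeasure (ν k)] :
    Measure.pi (fun _ : ι => ∑ k, c k • ν k) =
      ∑ t : ι → κ, (∏ i, c (t i)) • Measure.pi fun i => ν (t i) := by
  refine Measure.pi_eq fun s hs => ?_
  simp only [Measure.finsetSum_apply, Measure.smul_apply, Measure.pi_pi, Finset.prod_univ_sum,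
    Fintype.piFinset_univ, ENNReal.smul_def, smul_eq_mul, ENNReal.ofNNReal_finsetProd,
    Finset.prod_mul_distrib]

section ProductMoments

variable {ι : Type*} [Fintype ι] {μ : ι → Measure ℝ} [∀ i, IsProbabilityMeasure (μ i)]

theorem _root_.MeasureTheory.memLp_const_mul_eval_pi (hμ : ∀ i, MemLp id 2 (μ i)) (c : ι → ℝ)
    (i : ι) : MemLp (fun x : ι → ℝ => c i * x i) 2 (Measure.pi μ) :=
  ((hμ i).comp_measurePreserving (measurePreserving_eval μ i)).const_mul (c i)

theorem _root_.MeasureTheory.memLp_linear_pi (hμ : ∀ i, MemLp id 2 (μ i)) (c : ι → ℝ) :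
    MemLp (fun x : ι → ℝ => ∑ i, c i * x i) 2 (Measure.pi μ) :=
  memLp_finsetSum _ fun i _ => memLp_const_mul_eval_pi hμ c i

theorem _root_.MeasureTheory.integral_sq_affine_pi (hμ : ∀ i, MemLp id 2 (μ i)) (c : ι → ℝ)
    (b : ℝ) :
    ∫ x, (∑ i, c i * x i + b) ^ 2 ∂Measure.pi μ =
      ∑ i, c i ^ 2 * Var[id; μ i] + (∑ i, c i * ∫ y, y ∂μ i + b) ^ 2 := by
  have hS := memLp_linear_pi hμ c
  have hvar : Var[fun x : ι → ℝ => ∑ i, c i * x i + b; Measure.pi μ] =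
      ∑ i, c i ^ 2 * Var[id; μ i] := by
    have hindep : iIndepFun (fun i (x : ι → ℝ) => c i * x i) (Measure.pi μ) :=
      iIndepFun_pi (X := fun i y => c i * y) fun i => by fun_prop
    rw [variance_add_const hS.aestronglyMeasurable]
    have hsum := IndepFun.variance_sum (s := Finset.univ)
      (fun i _ => memLp_const_mul_eval_pi hμ c i) fun i _ j _ hij => hindep.indepFun hij
    simp only [Finset.sum_fn] at hsum
    rw [hsum]
    refine Finset.sum_congr rfl fun i _ => ?_
    rw [variance_const_mul]
    exact congrArg _ ((measurePreserving_eval μ i).variance_fun_comp (f := id) (by fun_prop))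
  have hmean : ∫ x, (∑ i, c i * x i + b) ∂Measure.pi μ = ∑ i, c i * ∫ y, y ∂μ i + b := by
    rw [integral_add (hS.integrable one_le_two) (integrable_const b),
      integral_finsetSum _ fun i _ => (memLp_const_mul_eval_pi hμ c i).integrable one_le_two]
    simp [integral_const_mul, integral_eval]
  have hY : MemLp (fun x : ι → ℝ => ∑ i, c i * x i + b) 2 (Measure.pi μ) :=
    hS.add (memLp_const b)
  rw [← hmean, ← hvar, variance_eq_sub hY]
  simp [Pi.pow_apply]

theorem _root_.MeasureTheory.lintegral_ofReal_sq_affine_pi (hμ : ∀ i, MemLp id 2 (μ i))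
    (c : ι → ℝ) (b : ℝ) :
    ∫⁻ x, ENNReal.ofReal ((∑ i, c i * x i + b) ^ 2) ∂Measure.pi μ =
      ENNReal.ofReal (∑ i, c i ^ 2 * Var[id; μ i] + (∑ i, c i * ∫ y, y ∂μ i + b) ^ 2) := by
  have hY : Integrable (fun x : ι → ℝ => (∑ i, c i * x i + b) ^ 2) (Measure.pi μ) :=
    ((memLp_linear_pi hμ c).add (memLp_const b)).integrable_sq
  rw [← integral_sq_affine_pi hμ c b,
    ofReal_integral_eq_lintegral_ofReal hY (ae_of_all _ fun x => sq_nonneg _)]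

end ProductMoments

theorem _root_.Finset.sum_filter_forall_notMem_prod {κ R : Type*} [Fintype κ] [DecidableEq κ]
    [CommSemiring R] (n : ℕ) (S : Finset κ) (f : κ → R) :
    ∑ t : Fin n → κ with ∀ i, t i ∉ S, ∏ i, f (t i) = (∑ k ∈ Sᶜ, f k) ^ n := by
  rw [← Fin.prod_const, Finset.prod_univ_sum]
  congr 1
  ext t
  simp [Fintype.mem_piFinset]

section Assignment

variable {n : ℕ}

def actionCount (t : Fin n → Fin K) (a : Fin K) : ℕ := (Finset.univ.filter fun i => t i = a).card

theorem actionCount_eq_zero_iff {t : Fin n → Fin K} {a : Fin K} :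
    actionCount t a = 0 ↔ ∀ i, t i ≠ a := by
  simp [actionCount, Finset.filter_eq_empty_iff]

theorem sum_div_actionCount (t : Fin n → Fin K) (g : Fin K → ℝ) :
    ∑ i, g (t i) / actionCount t (t i) = ∑ a, if 0 < actionCount t a then g a else 0 := by
  rw [← Finset.sum_fiberwise Finset.univ t]
  refine Finset.sum_congr rfl fun a _ => ?_
  rw [Finset.sum_congr rfl fun i hi => by rw [(Finset.mem_filter.mp hi).2], Finset.sum_const,
    nsmul_eq_mul]
  change (actionCount t a : ℝ) * (g a / actionCount t a) = _
  split_ifs with h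
  · have : (actionCount t a : ℝ) ≠ 0 := by exact_mod_cast h.ne'
    field_simp
  · simp [Nat.eq_zero_of_not_pos h]

def mkData (t : Fin n → Fin K) (x : Fin n → ℝ) : Fin n → Fin K × ℝ := fun i => (t i, x i)

theorem measurable_mkData (t : Fin n → Fin K) : Measurable (mkData t) := by
  unfold mkData
  fun_prop

-- Both sides vanish when `cnt n d a = 0`: the sum is empty and `x / 0 = 0`.
theorem rhat_eq_div (d : Fin n → Fin K × ℝ) (a : Fin K) :
    rhat n d a = (∑ i ∈ Finset.univ.filter (fun i => (d i).1 = a), (d i).2) / cnt n d a := by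
  rw [rhat, ite_eq_left_iff, not_lt, Nat.le_zero]
  intro h
  simp [h]

theorem measurable_vReg (π : Fin K → ℝ) : Measurable (vReg n π) := by
  refine Finset.measurable_sum _ fun a _ => Measurable.const_mul ?_ _
  have hcnt : Measurable fun d : Fin n → Fin K × ℝ => (cnt n d a : ℝ) :=
    (measurable_of_countable fun t : Fin n → Fin K => (actionCount t a : ℝ)).comp (by fun_prop)
  have haction (i : Fin n) : MeasurableSet {d : Fin n → Fin K × ℝ | (d i).1 = a} :=
    (by fun_prop : Measurable fun d : Fin n → Fin K × ℝ => (d i).1) (measurableSet_singleton a)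
  simp_rw [rhat_eq_div, Finset.sum_filter]
  exact (Finset.measurable_sum _ fun i _ =>
    (measurable_snd.comp (measurable_pi_apply i)).ite (haction i) measurable_const).div hcnt

theorem vReg_mkData (π : Fin K → ℝ) (t : Fin n → Fin K) (x : Fin n → ℝ) :
    vReg n π (mkData t x) = ∑ i, π (t i) / actionCount t (t i) * x i := by
  rw [vReg, ← Finset.sum_fiberwise Finset.univ t]
  refine Finset.sum_congr rfl fun a _ => ?_
  rw [rhat_eq_div]
  change π a * ((∑ i with t i = a, x i) / actionCount t a) =
    ∑ i with t i = a, π (t i) / actionCount t (t i) * x i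
  symm
  rw [Finset.sum_congr rfl fun i hi => by rw [(Finset.mem_filter.mp hi).2], ← Finset.mul_sum]
  ring

theorem lintegral_sq_vReg_mkData_sub_value {Φ : Fin K → ProbabilityMeasure ℝ}
    (hΦ : ∀ a, MemLp (fun x => x) 2 (Φ a : Measure ℝ)) (π : Fin K → ℝ) (t : Fin n → Fin K) :
    ∫⁻ x, ENNReal.ofReal ((vReg n π (mkData t x) - value π Φ) ^ 2)
        ∂Measure.pi (fun i => (Φ (t i) : Measure ℝ)) =
      ENNReal.ofReal ((∑ a, if 0 < actionCount t a then π a ^ 2 * envVar Φ a / actionCount t a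
          else 0) + (∑ a, if actionCount t a = 0 then π a * envMean Φ a else 0) ^ 2) := by
  have hvar (a : Fin K) : Var[id; (Φ a : Measure ℝ)] = envVar Φ a :=
    variance_eq_integral measurable_id.aemeasurable
  simp_rw [vReg_mkData, sub_eq_add_neg]
  rw [lintegral_ofReal_sq_affine_pi fun i => hΦ (t i)]
  simp only [hvar]
  have hV : ∑ i, (π (t i) / actionCount t (t i)) ^ 2 * envVar Φ (t i) =
      ∑ a, if 0 < actionCount t a then π a ^ 2 * envVar Φ a / actionCount t a else 0 := by
    rw [← sum_div_actionCount]
    exact Finset.sum_congr rfl fun i _ => by ring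
  have hB : ∑ i, π (t i) / actionCount t (t i) * ∫ y, y ∂(Φ (t i) : Measure ℝ) + -value π Φ =
      -∑ a, if actionCount t a = 0 then π a * envMean Φ a else 0 := by
    change ∑ i, π (t i) / actionCount t (t i) * envMean Φ (t i) + -value π Φ = _
    have := sum_div_actionCount t fun a => π a * envMean Φ a
    simp only [div_mul_eq_mul_div]
    rw [this, value, ← sub_eq_add_neg, ← Finset.sum_sub_distrib, ← Finset.sum_neg_distrib]
    refine Finset.sum_congr rfl fun a _ => ?_
    split_ifs <;> first | omega | ring
  rw [hV, hB, neg_sq]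

end Assignment

section Mixture

variable {n : ℕ}

theorem dataMeasure_eq_sum (πD : Fin K → ℝ) (Φ : Fin K → ProbabilityMeasure ℝ) :
    dataMeasure n πD Φ = ∑ t : Fin n → Fin K, (∏ i, (πD (t i)).toNNReal) •
      (Measure.pi fun i => (Φ (t i) : Measure ℝ)).map (mkData t) := by
  have hjoint : jointMeasure πD Φ = ∑ a, (πD a).toNNReal • (Φ a : Measure ℝ).map (Prod.mk a) := by
    simp only [jointMeasure, Measure.dirac_prod]
  rw [dataMeasure, hjoint, Measure.pi_sum_smul]
  refine Finset.sum_congr rfl fun t _ => ?_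
  exact congrArg _ (Measure.pi_map_pi (f := fun i => Prod.mk (t i)) fun i => by fun_prop).symm

theorem lintegral_dataMeasure {πD : Fin K → ℝ} (hπD : ∀ a, 0 ≤ πD a)
    {Φ : Fin K → ProbabilityMeasure ℝ} {F : (Fin n → Fin K × ℝ) → ℝ≥0∞} (hF : Measurable F) :
    ∫⁻ d, F d ∂dataMeasure n πD Φ = ∑ t : Fin n → Fin K, ENNReal.ofReal (∏ i, πD (t i)) *
        ∫⁻ x, F (mkData t x) ∂Measure.pi fun i => (Φ (t i) : Measure ℝ) := by
  rw [dataMeasure_eq_sum, lintegral_finsetSum_measure]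
  refine Finset.sum_congr rfl fun t _ => ?_
  rw [lintegral_smul_measure, lintegral_map hF (measurable_mkData t), ENNReal.smul_def,
    smul_eq_mul, ENNReal.ofReal, Real.toNNReal_prod_of_nonneg fun i _ => hπD (t i)]

theorem integral_dataMeasure_comp_actions {πD : Fin K → ℝ} (hπD : ∀ a, 0 ≤ πD a)
    {Φ : Fin K → ProbabilityMeasure ℝ} (f : (Fin n → Fin K) → ℝ) :
    ∫ d, f (fun i => (d i).1) ∂dataMeasure n πD Φ = ∑ t : Fin n → Fin K, (∏ i, πD (t i)) * f t := by
  have hf : Measurable fun d : Fin n → Fin K × ℝ => f fun i => (d i).1 :=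
    (measurable_of_countable f).comp (by fun_prop)
  have hint (t : Fin n → Fin K) : Integrable (fun d : Fin n → Fin K × ℝ => f fun i => (d i).1)
      ((Measure.pi fun i => (Φ (t i) : Measure ℝ)).map (mkData t)) :=
    (integrable_map_measure hf.aestronglyMeasurable (measurable_mkData t).aemeasurable).mpr
      (integrable_const (f t))
  rw [dataMeasure_eq_sum, integral_finsetSum_measure fun t _ => (hint t).smul_measure_nnreal]
  refine Finset.sum_congr rfl fun t _ => ?_
  rw [integral_smul_nnreal_measure,
    integral_map (measurable_mkData t).aemeasurable hf.aestronglyMeasurable]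
  simp only [mkData, integral_const, probReal_univ, NNReal.smul_def, smul_eq_mul, one_mul]
  rw [← Real.toNNReal_prod_of_nonneg fun i _ => hπD (t i),
    Real.coe_toNNReal _ (Finset.prod_nonneg fun i _ => hπD (t i))]

theorem mse_vReg_eq {πD : Fin K → ℝ} (hπD : ∀ a, 0 ≤ πD a) {Φ : Fin K → ProbabilityMeasure ℝ}
    (hΦ : ∀ a, MemLp (fun x => x) 2 (Φ a : Measure ℝ)) (π : Fin K → ℝ) :
    mse n π πD Φ (vReg n π) = ENNReal.ofReal (∑ t : Fin n → Fin K, (∏ i, πD (t i)) *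
      ((∑ a, if 0 < actionCount t a then π a ^ 2 * envVar Φ a / actionCount t a else 0) +
        (∑ a, if actionCount t a = 0 then π a * envMean Φ a else 0) ^ 2)) := by
  have hmeas : Measurable fun d => ENNReal.ofReal ((vReg n π d - value π Φ) ^ 2) := by
    have := measurable_vReg (n := n) π
    fun_prop
  have hweight (t : Fin n → Fin K) : 0 ≤ ∏ i, πD (t i) := Finset.prod_nonneg fun i _ => hπD (t i)
  have hvariance (t : Fin n → Fin K) (a : Fin K) :
      0 ≤ if 0 < actionCount t a then π a ^ 2 * envVar Φ a / actionCount t a else 0 := by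
    have : 0 ≤ envVar Φ a := integral_nonneg fun x => sq_nonneg _
    split_ifs
    exacts [by positivity, le_rfl]
  rw [mse, lintegral_dataMeasure hπD hmeas, ENNReal.ofReal_sum_of_nonneg fun t _ =>
    mul_nonneg (hweight t) (add_nonneg (Finset.sum_nonneg fun a _ => hvariance t a) (sq_nonneg _))]
  refine Finset.sum_congr rfl fun t _ => ?_
  rw [lintegral_sq_vReg_mkData_sub_value hΦ, ENNReal.ofReal_mul (hweight t)]

end Mixture

section Multinomial

variable {n : ℕ} {πD : Fin K → ℝ}

theorem sum_prod_avoid_pair_le (hπD : ∀ a, 0 ≤ πD a) (hπD1 : ∑ a, πD a = 1) (a b : Fin K) :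
    ∑ t : Fin n → Fin K with ∀ i, t i ∉ ({a, b} : Finset (Fin K)), ∏ i, πD (t i) ≤
      (1 - πD a) ^ n * (1 - πD b) ^ n +
        if a = b then (1 - πD a) ^ n * (1 - (1 - πD a) ^ n) else 0 := by
  have hcompl := Finset.sum_compl_add_sum ({a, b} : Finset (Fin K)) πD
  rw [Finset.sum_filter_forall_notMem_prod]
  rcases eq_or_ne a b with rfl | hab
  · rw [Finset.pair_eq_singleton, Finset.sum_singleton, hπD1] at hcompl
    rw [Finset.pair_eq_singleton, eq_sub_of_add_eq hcompl, if_pos rfl]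
    exact le_of_eq (by ring)
  · rw [Finset.sum_pair hab, hπD1] at hcompl
    have hrest : 0 ≤ ∑ k ∈ ({a, b} : Finset (Fin K))ᶜ, πD k := Finset.sum_nonneg fun k _ => hπD k
    rw [if_neg hab, add_zero, ← mul_pow]
    refine pow_le_pow_left₀ hrest ?_ n
    nlinarith [hπD a, hπD b]

theorem sum_prod_mul_sq_unvisited_eq (d : Fin K → ℝ) :
    ∑ t : Fin n → Fin K, (∏ i, πD (t i)) * (∑ a, if actionCount t a = 0 then d a else 0) ^ 2 =
      ∑ a, ∑ b, d a * d b *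
        ∑ t : Fin n → Fin K with ∀ i, t i ∉ ({a, b} : Finset (Fin K)), ∏ i, πD (t i) := by
  have hpair (t : Fin n → Fin K) (a b : Fin K) :
      ((if actionCount t a = 0 then d a else 0) * if actionCount t b = 0 then d b else 0) =
        d a * d b * if ∀ i, t i ∉ ({a, b} : Finset (Fin K)) then 1 else 0 := by
    simp only [actionCount_eq_zero_iff, Finset.mem_insert, Finset.mem_singleton, not_or,
      forall_and]
    split_ifs <;> simp_all
  simp_rw [sq, Finset.sum_mul_sum, Finset.mul_sum, hpair]
  rw [Finset.sum_comm]
  refine Finset.sum_congr rfl fun a _ => ?_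
  rw [Finset.sum_comm]
  refine Finset.sum_congr rfl fun b _ => ?_
  rw [Finset.sum_filter]
  refine Finset.sum_congr rfl fun t _ => ?_
  split_ifs <;> ring

theorem sum_prod_mul_sq_unvisited_le (hπD : ∀ a, 0 ≤ πD a) (hπD1 : ∑ a, πD a = 1)
    {d : Fin K → ℝ} (hd : ∀ a, 0 ≤ d a) :
    ∑ t : Fin n → Fin K, (∏ i, πD (t i)) * (∑ a, if actionCount t a = 0 then d a else 0) ^ 2 ≤
      (∑ a, d a * (1 - πD a) ^ n) ^ 2 +
        ∑ a, d a ^ 2 * ((1 - πD a) ^ n * (1 - (1 - πD a) ^ n)) := by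
  rw [sum_prod_mul_sq_unvisited_eq]
  calc _ ≤ ∑ a, ∑ b, d a * d b * ((1 - πD a) ^ n * (1 - πD b) ^ n +
          if a = b then (1 - πD a) ^ n * (1 - (1 - πD a) ^ n) else 0) :=
        Finset.sum_le_sum fun a _ => Finset.sum_le_sum fun b _ =>
          mul_le_mul_of_nonneg_left (sum_prod_avoid_pair_le hπD hπD1 a b) (mul_nonneg (hd a) (hd b))
    _ = _ := by
      simp only [mul_add, Finset.sum_add_distrib, mul_ite, mul_zero, Finset.sum_ite_eq,
        Finset.mem_univ, if_true, sq, Finset.sum_mul_sum]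
      congr 1
      exact Finset.sum_congr rfl fun a _ => Finset.sum_congr rfl fun b _ => by ring

theorem sum_prod_mul_sum_div_actionCount (hπD1 : ∑ a, πD a = 1) (u : Fin K → ℝ) :
    ∑ t : Fin n → Fin K, (∏ i, πD (t i)) *
        ∑ a, (if 0 < actionCount t a then u a / actionCount t a else 0) =
      ((∑ a, u a / πD a) +
        ∑ a, (∑ t : Fin n → Fin K, (∏ i, πD (t i)) *
            ((if 0 < actionCount t a then (n : ℝ) / actionCount t a else 0) - 1 / πD a)) *
          u a) / n := by
  have hmass : ∑ t : Fin n → Fin K, ∏ i, πD (t i) = 1 := by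
    simpa [hπD1] using Finset.sum_filter_forall_notMem_prod n ∅ πD
  have hterm (t : Fin n → Fin K) (a : Fin K) :
      (if 0 < actionCount t a then u a / actionCount t a else 0) =
        (if 0 < actionCount t a then (n : ℝ) / actionCount t a else 0) * u a / n := by
    split_ifs with h
    · have hn : (actionCount t a : ℝ) ≤ n := by
        exact_mod_cast (Finset.card_filter_le _ _).trans_eq (Finset.card_fin n)
      have : (0 : ℝ) < actionCount t a := by exact_mod_cast h
      have : (n : ℝ) ≠ 0 := by linarith
      field_simp
    · simp
  simp_rw [hterm, Finset.mul_sum]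
  rw [Finset.sum_comm, ← Finset.sum_add_distrib, Finset.sum_div]
  refine Finset.sum_congr rfl fun a _ => ?_
  simp_rw [mul_sub, Finset.sum_sub_distrib, ← Finset.sum_mul, hmass, ← mul_div_assoc,
    ← mul_assoc, ← Finset.sum_div, ← Finset.sum_mul]
  ring

end Multinomial

theorem mse_vReg_upper_bound_general {K : ℕ} (n : ℕ)
    (π πD : Fin K → ℝ) (hπ : IsPolicy π) (hπD : IsBehaviorPolicy πD)
    (Φ : Fin K → ProbabilityMeasure ℝ)
    (hΦ : ∀ a, MemLp (fun x => x) 2 (Φ a : Measure ℝ))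
    (hr : ∀ a, 0 ≤ envMean Φ a) :
    mse n π πD Φ (vReg n π) ≤
      ENNReal.ofReal (
        ((∑ a, π a * envMean Φ a * (1 - πD a) ^ n) ^ 2 +
          ∑ a, π a ^ 2 * envMean Φ a ^ 2 *
            ((1 - πD a) ^ n * (1 - (1 - πD a) ^ n))) +
        ((∑ a, π a ^ 2 * envVar Φ a / πD a) +
          ∑ a, (∫ d, ((if 0 < cnt n d a then (n : ℝ) / (cnt n d a : ℝ) else 0) - 1 / πD a)
              ∂(dataMeasure n πD Φ)) * (π a ^ 2 * envVar Φ a)) / n) := by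
  have hπD₀ (a : Fin K) : 0 ≤ πD a := (hπD.1 a).le
  have hV₃ (a : Fin K) :
      ∫ d, ((if 0 < cnt n d a then (n : ℝ) / (cnt n d a : ℝ) else 0) - 1 / πD a)
          ∂(dataMeasure n πD Φ) = ∑ t : Fin n → Fin K, (∏ i, πD (t i)) *
        ((if 0 < actionCount t a then (n : ℝ) / actionCount t a else 0) - 1 / πD a) :=
    -- `cnt n d a` unfolds to `actionCount (fun i => (d i).1) a`
    integral_dataMeasure_comp_actions hπD₀ fun t =>
      (if 0 < actionCount t a then (n : ℝ) / actionCount t a else 0) - 1 / πD a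
  have hvar := sum_prod_mul_sum_div_actionCount (n := n) hπD.2 fun a => π a ^ 2 * envVar Φ a
  have hbias := sum_prod_mul_sq_unvisited_le (n := n) hπD₀ hπD.2
    (d := fun a => π a * envMean Φ a) fun a => mul_nonneg (hπ.1 a) (hr a)
  simp only [mul_pow] at hbias
  rw [mse_vReg_eq hπD₀ hΦ π]
  refine ENNReal.ofReal_le_ofReal ?_
  simp only [hV₃, mul_add, Finset.sum_add_distrib] at hvar ⊢
  linarith

/-- Proposition 2, upper bound: for nonnegative mean rewards,
`MSE(v̂_Reg) ≤ V_{0,n} + (V₁ + V_{3,n})/n` with `p_{a,n} = (1 − π_D(a))^n`,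
`V_{0,n} = (Σ_a π(a) r_Φ(a) p_{a,n})² + Σ_a π(a)² r_Φ(a)² p_{a,n}(1 − p_{a,n})`,
`V₁ = Σ_a π(a)² σ²_Φ(a)/π_D(a)`, and
`V_{3,n} = Σ_a E[1{n(a)>0}·n/n(a) − 1/π_D(a)] π(a)² σ²_Φ(a)`
(note `1/π̂_D(a) = n/n(a)`). -/
theorem mse_vReg_upper_bound {K : ℕ} (n : ℕ) (hn : 0 < n)
    (π πD : Fin K → ℝ) (hπ : IsPolicy π) (hπD : IsBehaviorPolicy πD)
    (Φ : Fin K → ProbabilityMeasure ℝ)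
    (hΦ : ∀ a, MemLp (fun x => x) 2 (Φ a : Measure ℝ))
    (hr : ∀ a, 0 ≤ envMean Φ a) :
    mse n π πD Φ (vReg n π) ≤
      ENNReal.ofReal (
        ((∑ a, π a * envMean Φ a * (1 - πD a) ^ n) ^ 2 +
          ∑ a, π a ^ 2 * envMean Φ a ^ 2 *
            ((1 - πD a) ^ n * (1 - (1 - πD a) ^ n))) +
        ((∑ a, π a ^ 2 * envVar Φ a / πD a) +
          ∑ a, (∫ d, ((if 0 < cnt n d a then (n : ℝ) / (cnt n d a : ℝ) else 0) - 1 / πD a)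
              ∂(dataMeasure n πD Φ)) * (π a ^ 2 * envVar Φ a)) / n) :=
  mse_vReg_upper_bound_general n π πD hπ hπD Φ hΦ hr

end OffPolicy
end
end

section
/- The regression estimator has expectation E[v̂_Reg] = Σ_a π(a) r_Φ(a) (1 − p_{a,n}), where p_{a,n} = (1 − π_D(a))^n; consequently its bias is E[v̂_Reg] − v^π_Φ = − Σ_a π(a) r_Φ(a) p_{a,n}, and the squared bias equals (Σ_a π(a) r_Φ(a) p_{a,n})². -/
open MeasureTheory ProbabilityTheory ENNReal Filter

noncomputable section

namespace OffPolicy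

variable {K : ℕ}

/-!
Conditionally on the action sequence `f : Fin n → Fin K`, the rewards are independent with laws
`Φ (f i)`, so `r̂(a)` has conditional mean `r_Φ(a)` if `a` occurs in `f` and is `0` otherwise.
Averaging over `f` with weights `∏ i, π_D(f i)`, the sequences avoiding `a` have total weight
`(1 - π_D(a))^n`, which gives the expectation; bias and squared bias are then algebra.
-/

open scoped NNReal

section PiMeasure

variable {ι α β : Type*} [Fintype ι] [MeasurableSpace β]

theorem pi_const_sum_smul [DecidableEq ι] [Fintype α] (c : α → ℝ≥0) (κ : α → Measure β)
    [∀ a, IsFiniteMeasure (κ a)] :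
    Measure.pi (fun _ : ι => ∑ a, c a • κ a) =
      ∑ f : ι → α, (∏ i, c (f i)) • Measure.pi (fun i => κ (f i)) := by
  refine Measure.pi_eq fun s _ => ?_
  simp only [Measure.coe_finsetSum, Finset.sum_apply, Measure.smul_apply, Measure.pi_pi,
    ENNReal.smul_def, smul_eq_mul, ENNReal.ofNNReal_finsetProd, ← Finset.prod_mul_distrib]
  rw [Fintype.prod_sum]

variable [MeasurableSpace α]

theorem pi_dirac_prod_eq_map (f : ι → α) (ν : ι → Measure β) [∀ i, IsProbabilityMeasure (ν i)] :
    Measure.pi (fun i => (Measure.dirac (f i)).prod (ν i)) =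
      (Measure.pi ν).map (fun r i => (f i, r i)) := by
  have (i : ι) : IsProbabilityMeasure ((ν i).map (Prod.mk (f i))) :=
    Measure.isProbabilityMeasure_map measurable_prodMk_left.aemeasurable
  simp_rw [Measure.dirac_prod]
  exact (Measure.pi_map_pi fun i => measurable_prodMk_left.aemeasurable).symm

omit [Fintype ι] in
theorem measurableEmbedding_pi_prodMk_left [MeasurableSingletonClass α] [Countable ι] (f : ι → α) :
    MeasurableEmbedding (fun (r : ι → β) i => (f i, r i)) :=
  (MeasurableEquiv.arrowProdEquivProdArrow α β ι).symm.measurableEmbedding.comp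
    (measurableEmbedding_prodMk_left f)

end PiMeasure

theorem sum_prod_filter_mem_range {ι α R : Type*} [Fintype ι] [DecidableEq ι] [Fintype α]
    [DecidableEq α] [CommRing R] (p : α → R) (a : α) :
    ∑ f ∈ Finset.univ.filter (fun f : ι → α => a ∈ Set.range f), ∏ i, p (f i) =
      (∑ b, p b) ^ Fintype.card ι - (∑ b, p b - p a) ^ Fintype.card ι := by
  have htotal : ∑ f : ι → α, ∏ i, p (f i) = (∑ b, p b) ^ Fintype.card ι := by
    rw [← Fintype.prod_sum fun _ b => p b, Finset.prod_const, Finset.card_univ]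
  have hmissing : ∑ f ∈ Finset.univ.filter (fun f : ι → α => a ∉ Set.range f), ∏ i, p (f i) =
      (∑ b, p b - p a) ^ Fintype.card ι := by
    have : Finset.univ.filter (fun f : ι → α => a ∉ Set.range f) =
        Fintype.piFinset fun _ => Finset.univ.erase a := by
      ext f
      simp [Fintype.mem_piFinset, eq_comm]
    rw [this, ← Finset.prod_univ_sum, Finset.sum_erase_eq_sub (Finset.mem_univ a),
      Finset.prod_const, Finset.card_univ]
  rw [← htotal, ← hmissing, ← Finset.sum_filter_add_sum_filter_not Finset.univ
    (fun f : ι → α => a ∈ Set.range f), add_sub_cancel_right]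

section Dataset

variable {n : ℕ} {πD : Fin K → ℝ} {Φ : Fin K → ProbabilityMeasure ℝ}

theorem integral_dataMeasure_eq_sum (hπD : ∀ a, 0 ≤ πD a) {g : (Fin n → Fin K × ℝ) → ℝ}
    (hg : ∀ f : Fin n → Fin K, Integrable (fun r => g fun i => (f i, r i))
      (Measure.pi fun i => (Φ (f i) : Measure ℝ))) :
    ∫ d, g d ∂dataMeasure n πD Φ = ∑ f : Fin n → Fin K, (∏ i, πD (f i)) *
      ∫ r, g (fun i => (f i, r i)) ∂Measure.pi fun i => (Φ (f i) : Measure ℝ) := by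
  have hdata : dataMeasure n πD Φ = ∑ f : Fin n → Fin K, (∏ i, (πD (f i)).toNNReal) •
      (Measure.pi fun i => (Φ (f i) : Measure ℝ)).map fun r i => (f i, r i) := by
    simp_rw [dataMeasure, jointMeasure, pi_const_sum_smul, pi_dirac_prod_eq_map]
  rw [hdata, integral_finsetSum_measure fun f _ =>
    ((measurableEmbedding_pi_prodMk_left f).integrable_map_iff.2 (hg f)).smul_measure_nnreal]
  refine Finset.sum_congr rfl fun f _ => ?_
  rw [integral_smul_nnreal_measure, (measurableEmbedding_pi_prodMk_left f).integral_map,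
    NNReal.smul_def, NNReal.coe_prod, smul_eq_mul]
  simp_rw [Real.coe_toNNReal _ (hπD _)]

theorem rhat_of_actions (f : Fin n → Fin K) (r : Fin n → ℝ) (a : Fin K) :
    rhat n (fun i => (f i, r i)) a = if a ∈ Set.range f then
      (∑ i ∈ Finset.univ.filter (f · = a), r i) / (Finset.univ.filter (f · = a)).card
    else 0 := by
  simp only [rhat, cnt, Finset.card_pos, Finset.filter_nonempty_iff, Finset.mem_univ, true_and,
    Set.mem_range]

variable (hΦ : ∀ a, Integrable (fun x => x) (Φ a : Measure ℝ))
include hΦ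

theorem integrable_rhat_of_actions (f : Fin n → Fin K) (a : Fin K) :
    Integrable (fun r => rhat n (fun i => (f i, r i)) a)
      (Measure.pi fun i => (Φ (f i) : Measure ℝ)) := by
  simp_rw [rhat_of_actions]
  by_cases h : a ∈ Set.range f
  · simp only [h, if_true]
    exact (integrable_finsetSum _ fun i _ => integrable_eval (hΦ (f i))).div_const _
  · simp only [h, if_false]
    exact integrable_zero _ _ _

theorem integral_rhat_of_actions (f : Fin n → Fin K) (a : Fin K) :
    ∫ r, rhat n (fun i => (f i, r i)) a ∂Measure.pi (fun i => (Φ (f i) : Measure ℝ)) =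
      if a ∈ Set.range f then envMean Φ a else 0 := by
  simp_rw [rhat_of_actions]
  by_cases h : a ∈ Set.range f
  · have hcard : ((Finset.univ.filter (f · = a)).card : ℝ) ≠ 0 := by
      obtain ⟨i, hi⟩ := h
      exact Nat.cast_ne_zero.2
        (Finset.card_ne_zero_of_mem (Finset.mem_filter.2 ⟨Finset.mem_univ i, hi⟩))
    have hmean : ∀ i ∈ Finset.univ.filter (f · = a),
        ∫ r, r i ∂Measure.pi (fun i => (Φ (f i) : Measure ℝ)) = envMean Φ a := by
      intro i hi
      rw [integral_eval, (Finset.mem_filter.1 hi).2, envMean]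
    simp only [h, if_true]
    rw [integral_div, integral_finsetSum _ fun i _ =>
        integrable_eval (μ := fun i => (Φ (f i) : Measure ℝ)) (hΦ (f i)),
      Finset.sum_congr rfl hmean, Finset.sum_const, nsmul_eq_mul, mul_div_cancel_left₀ _ hcard]
  · simp [h]

theorem integral_vReg_of_actions (π : Fin K → ℝ) (f : Fin n → Fin K) :
    ∫ r, vReg n π (fun i => (f i, r i)) ∂Measure.pi (fun i => (Φ (f i) : Measure ℝ)) =
      ∑ a, π a * if a ∈ Set.range f then envMean Φ a else 0 := by
  unfold vReg
  rw [integral_finsetSum _ fun a _ => (integrable_rhat_of_actions hΦ f a).const_mul _]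
  simp_rw [integral_const_mul, integral_rhat_of_actions hΦ]

theorem integral_vReg (π : Fin K → ℝ) (hπD : IsBehaviorPolicy πD) :
    ∫ d, vReg n π d ∂dataMeasure n πD Φ = ∑ a, π a * envMean Φ a * (1 - (1 - πD a) ^ n) := by
  rw [integral_dataMeasure_eq_sum (fun a => (hπD.1 a).le) fun f =>
    integrable_finsetSum _ fun a _ => (integrable_rhat_of_actions hΦ f a).const_mul _]
  simp_rw [integral_vReg_of_actions hΦ, Finset.mul_sum]
  rw [Finset.sum_comm]
  refine Finset.sum_congr rfl fun a _ => ?_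
  have hweight := sum_prod_filter_mem_range (ι := Fin n) πD a
  rw [hπD.2, Fintype.card_fin, one_pow] at hweight
  rw [← hweight, Finset.sum_filter, Finset.mul_sum]
  refine Finset.sum_congr rfl fun f _ => ?_
  split_ifs <;> ring

end Dataset

theorem vReg_expectation_and_bias_general {K : ℕ} (n : ℕ)
    (π πD : Fin K → ℝ) (hπD : IsBehaviorPolicy πD)
    (Φ : Fin K → ProbabilityMeasure ℝ)
    (hΦ : ∀ a, Integrable (fun x => x) (Φ a : Measure ℝ)) :
    (∫ d, vReg n π d ∂(dataMeasure n πD Φ)) =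
        ∑ a, π a * envMean Φ a * (1 - (1 - πD a) ^ n) ∧
    (∫ d, vReg n π d ∂(dataMeasure n πD Φ)) - value π Φ =
        -∑ a, π a * envMean Φ a * (1 - πD a) ^ n ∧
    ((∫ d, vReg n π d ∂(dataMeasure n πD Φ)) - value π Φ) ^ 2 =
        (∑ a, π a * envMean Φ a * (1 - πD a) ^ n) ^ 2 := by
  have hbias : (∫ d, vReg n π d ∂(dataMeasure n πD Φ)) - value π Φ =
      -∑ a, π a * envMean Φ a * (1 - πD a) ^ n := by
    rw [integral_vReg hΦ π hπD, value, ← Finset.sum_sub_distrib, ← Finset.sum_neg_distrib]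
    exact Finset.sum_congr rfl fun a _ => by ring
  exact ⟨integral_vReg hΦ π hπD, hbias, by rw [hbias, neg_sq]⟩

/-- the expectation of the regression estimator is
`Σ_a π(a) r_Φ(a)(1 − p_{a,n})` with `p_{a,n} = (1 − π_D(a))^n`; hence its bias is
`−Σ_a π(a) r_Φ(a) p_{a,n}` and its squared bias is `(Σ_a π(a) r_Φ(a) p_{a,n})²`. -/
theorem vReg_expectation_and_bias {K : ℕ} (n : ℕ)
    (π πD : Fin K → ℝ) (hπ : IsPolicy π) (hπD : IsBehaviorPolicy πD)
    (Φ : Fin K → ProbabilityMeasure ℝ)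
    (hΦ : ∀ a, Integrable (fun x => x) (Φ a : Measure ℝ)) :
    (∫ d, vReg n π d ∂(dataMeasure n πD Φ)) =
        ∑ a, π a * envMean Φ a * (1 - (1 - πD a) ^ n) ∧
    (∫ d, vReg n π d ∂(dataMeasure n πD Φ)) - value π Φ =
        -∑ a, π a * envMean Φ a * (1 - πD a) ^ n ∧
    ((∫ d, vReg n π d ∂(dataMeasure n πD Φ)) - value π Φ) ^ 2 =
        (∑ a, π a * envMean Φ a * (1 - πD a) ^ n) ^ 2 :=
  vReg_expectation_and_bias_general n π πD hπD Φ hΦ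

end OffPolicy
end
end

section
/- Let K ≥ 2, let π = π_D be the uniform distribution on A = {1,…,K}, and let the environment have deterministic rewards r_Φ(a) = 1 for all a (so σ²_Φ ≡ 0 and v^π_Φ = 1). Then for every n ≥ 1 the regression estimator satisfies MSE(v̂_Reg) ≥ (Σ_a π(a) p_{a,n})² = (1 − 1/K)^{2n} ≥ e^{−2n/(K−1)}, while sup over environments Φ with 0 ≤ r_Φ ≤ 1 and σ²_Φ = 0 of MSE(v̂_LR) = sup of V₂/n ≤ 1/n, where V₂ = Σ_a π(a)² r_Φ(a)²/π_D(a) − (v^π_Φ)². -/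
/-!
With deterministic rewards `r`, the dataset is the image of the i.i.d. action sequence under
`a ↦ (a, r a)`, so every mean squared error is a finite sum over action sequences `f`, weighted
by `∏ i, πD (f i)`.

For `r ≡ 1` the regression estimator loses exactly the mass `π a` of every action `a` that was
never sampled. This missing mass has mean `∑ a, π a * (1 - πD a) ^ n`, and Jensen's inequality
bounds the MSE below by the square of that mean. The likelihood ratio estimator is an average of
`n` i.i.d. centred terms `π A * r A / πD A - v`, so its MSE is their variance `V₂` divided by `n`;
when `π = πD` and `r` takes values in `[0, 1]`, `V₂ ≤ ∑ a, π a * r a ^ 2 ≤ 1`. Finally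
`1 - 1/K = (1 + 1/(K-1))⁻¹ ≥ exp (-1/(K-1))`.
-/

open MeasureTheory ProbabilityTheory ENNReal Filter

noncomputable section

namespace OffPolicy

variable {K : ℕ}

variable {n : ℕ}

lemma eq_dirac_of_ae_eq {α : Type*} [MeasurableSpace α] {μ : Measure α} [IsProbabilityMeasure μ]
    {c : α} (h : ∀ᵐ x ∂μ, x = c) : μ = Measure.dirac c :=
  calc μ = μ.map id := Measure.map_id.symm
    _ = μ.map (fun _ => c) := Measure.map_congr h
    _ = Measure.dirac c := by simp [Measure.map_const]

lemma eq_dirac_envMean_of_envVar_eq_zero {Φ : Fin K → ProbabilityMeasure ℝ} {a : Fin K}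
    (hL : MemLp (fun x => x) 2 (Φ a : Measure ℝ)) (hv : envVar Φ a = 0) :
    (Φ a : Measure ℝ) = Measure.dirac (envMean Φ a) := by
  have hvar : Var[fun x => x; (Φ a : Measure ℝ)] = 0 := by
    rwa [variance_eq_integral measurable_id'.aemeasurable]
  refine eq_dirac_of_ae_eq ((evariance_eq_zero_iff measurable_id'.aemeasurable).1 ?_)
  rw [← hL.ofReal_variance_eq, hvar, ENNReal.ofReal_zero]

lemma envMean_of_eq_dirac {Φ : Fin K → ProbabilityMeasure ℝ} {m : Fin K → ℝ}
    (hΦ : ∀ a, (Φ a : Measure ℝ) = Measure.dirac (m a)) (a : Fin K) : envMean Φ a = m a := by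
  simp [envMean, hΦ]

def actionLaw (πD : Fin K → ℝ) : Measure (Fin K) :=
  ∑ a, (πD a).toNNReal • Measure.dirac a

instance (πD : Fin K → ℝ) : IsFiniteMeasure (actionLaw πD) := by
  unfold actionLaw
  infer_instance

lemma actionLaw_singleton (πD : Fin K → ℝ) (a : Fin K) :
    actionLaw πD {a} = ENNReal.ofReal (πD a) := by
  simp [actionLaw, Set.indicator, ENNReal.ofReal]

lemma jointMeasure_eq_map (πD : Fin K → ℝ) {Φ : Fin K → ProbabilityMeasure ℝ} {m : Fin K → ℝ}
    (hΦ : ∀ a, (Φ a : Measure ℝ) = Measure.dirac (m a)) :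
    jointMeasure πD Φ = (actionLaw πD).map (fun a => (a, m a)) := by
  ext s hs
  rw [Measure.map_apply (by fun_prop) hs]
  simp [jointMeasure, actionLaw, hΦ, Measure.dirac_prod_dirac, Measure.dirac_apply' _ hs,
    Set.indicator]
  rfl

lemma dataMeasure_eq_map (πD : Fin K → ℝ) {Φ : Fin K → ProbabilityMeasure ℝ} {m : Fin K → ℝ}
    (hΦ : ∀ a, (Φ a : Measure ℝ) = Measure.dirac (m a)) :
    dataMeasure n πD Φ = (Measure.pi fun _ => actionLaw πD).map (fun f i => (f i, m (f i))) := by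
  rw [dataMeasure, Measure.pi_map_pi (f := fun _ a => (a, m a)) (fun _ => by fun_prop),
    jointMeasure_eq_map πD hΦ]

/-- It is an embedding, so `lintegral_map` applies to estimators that need not be measurable. -/
lemma measurableEmbedding_graph (m : Fin K → ℝ) :
    MeasurableEmbedding (fun (f : Fin n → Fin K) i => (f i, m (f i))) :=
  MeasurableEmbedding.of_measurable_inverse (by fun_prop) (Set.countable_range _).measurableSet
    (g := fun d i => (d i).1) (by fun_prop) (fun _ => rfl)

lemma mse_eq_sum (π : Fin K → ℝ) {πD : Fin K → ℝ} (hπD : ∀ a, 0 ≤ πD a)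
    {Φ : Fin K → ProbabilityMeasure ℝ} {m : Fin K → ℝ}
    (hΦ : ∀ a, (Φ a : Measure ℝ) = Measure.dirac (m a)) (est : (Fin n → Fin K × ℝ) → ℝ) :
    mse n π πD Φ est = ENNReal.ofReal (∑ f : Fin n → Fin K,
      (∏ i, πD (f i)) * (est (fun i => (f i, m (f i))) - value π Φ) ^ 2) := by
  have hw (f : Fin n → Fin K) : 0 ≤ ∏ i, πD (f i) := Finset.prod_nonneg fun i _ => hπD (f i)
  rw [mse, dataMeasure_eq_map πD hΦ, (measurableEmbedding_graph m).lintegral_map,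
    lintegral_fintype, ENNReal.ofReal_sum_of_nonneg fun f _ => mul_nonneg (hw f) (sq_nonneg _)]
  refine Finset.sum_congr rfl fun f _ => ?_
  rw [Measure.pi_singleton, ENNReal.ofReal_mul (hw f), mul_comm,
    ENNReal.ofReal_prod_of_nonneg fun i _ => hπD (f i)]
  simp only [actionLaw_singleton]

section IIDSums

variable {ι κ R : Type*} [Fintype ι] [DecidableEq ι] [Fintype κ]

lemma sum_prod_mul_prod [CommSemiring R] (p : κ → R) (g : ι → κ → R) :
    ∑ f : ι → κ, (∏ i, p (f i)) * ∏ i, g i (f i) = ∏ i, ∑ b, p b * g i b := by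
  simp only [← Finset.prod_mul_distrib, Fintype.prod_sum]

lemma sum_prod_mul_boole_forall_ne [DecidableEq κ] [CommRing R] {p : κ → R}
    (hp : ∑ b, p b = 1) (a : κ) :
    ∑ f : ι → κ, (∏ i, p (f i)) * (if ∀ i, f i ≠ a then 1 else 0) =
      (1 - p a) ^ Fintype.card ι := by
  have hcol : ∑ b, (if b = a then 0 else p b) = 1 - p a := by
    rw [Finset.sum_ite, Finset.sum_const_zero, zero_add, Finset.filter_ne',
      Finset.sum_erase_eq_sub (Finset.mem_univ a), hp]
  simp only [← Fintype.prod_boole]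
  rw [sum_prod_mul_prod p (fun _ b => if b ≠ a then 1 else 0)]
  simp [hcol]

lemma sum_prod_eq_one [CommSemiring R] {p : κ → R} (hp : ∑ b, p b = 1) :
    ∑ f : ι → κ, ∏ i, p (f i) = 1 := by
  simpa [hp] using sum_prod_mul_prod (ι := ι) p fun _ _ => (1 : R)

lemma sum_prod_mul_apply_mul_apply [CommRing R] {p c : κ → R} (hp : ∑ b, p b = 1)
    (hc : ∑ b, p b * c b = 0) (i j : ι) :
    ∑ f : ι → κ, (∏ k, p (f k)) * (c (f i) * c (f j)) =
      if i = j then ∑ b, p b * c b ^ 2 else 0 := by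
  have hprod (f : ι → κ) : c (f i) * c (f j) =
      ∏ k, (if k = i then c (f k) else 1) * (if k = j then c (f k) else 1) := by
    rw [Finset.prod_mul_distrib, Finset.prod_ite_eq', Finset.prod_ite_eq']
    simp
  simp_rw [hprod]
  rw [sum_prod_mul_prod p (fun k b => (if k = i then c b else 1) * (if k = j then c b else 1))]
  split_ifs with hij
  · subst hij
    rw [Finset.prod_eq_single i (fun k _ hk => by simp [hk, hp]) (by simp)]
    simp [sq]
  · exact Finset.prod_eq_zero (Finset.mem_univ i) (by simp [hij, hc])

lemma sum_prod_mul_sum_sq [CommRing R] {p c : κ → R} (hp : ∑ b, p b = 1)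
    (hc : ∑ b, p b * c b = 0) :
    ∑ f : ι → κ, (∏ k, p (f k)) * (∑ i, c (f i)) ^ 2 =
      Fintype.card ι * ∑ b, p b * c b ^ 2 := by
  simp_rw [sq (∑ i, _), Finset.sum_mul_sum, Finset.mul_sum]
  rw [Finset.sum_comm]
  simp_rw [Finset.sum_comm (γ := ι → κ), sum_prod_mul_apply_mul_apply hp hc]
  simp [Finset.mul_sum]

end IIDSums

lemma IsBehaviorPolicy.isPolicy {πD : Fin K → ℝ} (h : IsBehaviorPolicy πD) : IsPolicy πD :=
  ⟨fun a => (h.1 a).le, h.2⟩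

lemma isBehaviorPolicy_uniform (hK : K ≠ 0) : IsBehaviorPolicy fun _ : Fin K => 1 / (K : ℝ) :=
  ⟨fun _ => by positivity, by simp [hK]⟩

lemma rhat_of_rewards_one (f : Fin n → Fin K) (a : Fin K) :
    rhat n (fun i => (f i, 1)) a = if ∀ i, f i ≠ a then 0 else 1 := by
  by_cases h : ∀ i, f i ≠ a
  · simp [rhat, cnt, h]
  · have hpos : 0 < cnt n (fun i => (f i, 1)) a := by
      push Not at h
      obtain ⟨i, hi⟩ := h
      exact Finset.card_pos.2 ⟨i, by simp [hi]⟩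
    simp only [rhat, if_pos hpos, if_neg h]
    rw [Finset.sum_const, nsmul_one]
    exact div_self (Nat.cast_ne_zero.2 hpos.ne')

lemma one_sub_vReg_of_rewards_one {π : Fin K → ℝ} (hπ : ∑ a, π a = 1) (f : Fin n → Fin K) :
    1 - vReg n π (fun i => (f i, 1)) = ∑ a, π a * if ∀ i, f i ≠ a then 1 else 0 := by
  simp only [vReg, rhat_of_rewards_one]
  nth_rw 1 [← hπ]
  rw [← Finset.sum_sub_distrib]
  refine Finset.sum_congr rfl fun a _ => ?_
  split_ifs <;> ring

theorem sq_sum_mul_one_sub_pow_le_mse_vReg {π πD : Fin K → ℝ} (hπ : ∑ a, π a = 1)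
    (hπD : IsPolicy πD) {Φ : Fin K → ProbabilityMeasure ℝ}
    (hΦ : ∀ a, (Φ a : Measure ℝ) = Measure.dirac 1) :
    ENNReal.ofReal ((∑ a, π a * (1 - πD a) ^ n) ^ 2) ≤ mse n π πD Φ (vReg n π) := by
  have hval : value π Φ = 1 := by
    simp [value, envMean_of_eq_dirac (m := fun _ => 1) hΦ, hπ]
  rw [mse_eq_sum π hπD.1 (m := fun _ => 1) hΦ]
  refine ENNReal.ofReal_le_ofReal ?_
  set w : (Fin n → Fin K) → ℝ := fun f => ∏ i, πD (f i)
  set G : (Fin n → Fin K) → ℝ := fun f => ∑ a, π a * if ∀ i, f i ≠ a then 1 else 0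
  have hmean : ∑ f, w f * G f = ∑ a, π a * (1 - πD a) ^ n := by
    simp only [w, G, Finset.mul_sum, mul_left_comm _ (π _)]
    rw [Finset.sum_comm]
    refine Finset.sum_congr rfl fun a _ => ?_
    rw [← Finset.mul_sum]
    -- `Fin n` has its own `Decidable (∀ i, _)` instance, so the lemma only matches up to `convert`.
    convert congrArg (π a * ·) (sum_prod_mul_boole_forall_ne (ι := Fin n) hπD.2 a) using 6
    exact (Fintype.card_fin n).symm
  calc (∑ a, π a * (1 - πD a) ^ n) ^ 2 = (∑ f, w f * G f) ^ 2 := by rw [hmean]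
    _ ≤ ∑ f, w f * G f ^ 2 :=
      (even_two.convexOn_pow).map_sum_le (fun f _ => Finset.prod_nonneg fun i _ => hπD.1 _)
        (sum_prod_eq_one hπD.2) (fun _ _ => Set.mem_univ _)
    _ = ∑ f, w f * (vReg n π (fun i => (f i, 1)) - value π Φ) ^ 2 := by
      simp only [G, hval, ← one_sub_vReg_of_rewards_one hπ]
      ring_nf

/-- The paper's `V₂`. -/
def lrVariance (π πD : Fin K → ℝ) (Φ : Fin K → ProbabilityMeasure ℝ) : ℝ :=
  ∑ a, π a ^ 2 * envMean Φ a ^ 2 / πD a - value π Φ ^ 2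

lemma sum_mul_sq_sub_value_eq_lrVariance (π : Fin K → ℝ) {πD : Fin K → ℝ}
    (hπD : IsBehaviorPolicy πD) (Φ : Fin K → ProbabilityMeasure ℝ) :
    ∑ a, πD a * (π a / πD a * envMean Φ a - value π Φ) ^ 2 = lrVariance π πD Φ := by
  have hterm (a : Fin K) : πD a * (π a / πD a * envMean Φ a - value π Φ) ^ 2 =
      π a ^ 2 * envMean Φ a ^ 2 / πD a - 2 * value π Φ * (π a * envMean Φ a) +
        value π Φ ^ 2 * πD a := by
    field_simp [(hπD.1 a).ne']
    ring
  simp only [hterm, Finset.sum_add_distrib, Finset.sum_sub_distrib, ← Finset.mul_sum, hπD.2]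
  rw [lrVariance, value]
  ring

theorem mse_vLR_of_eq_dirac (hn : n ≠ 0) (π : Fin K → ℝ) {πD : Fin K → ℝ}
    (hπD : IsBehaviorPolicy πD) {Φ : Fin K → ProbabilityMeasure ℝ}
    (hΦ : ∀ a, (Φ a : Measure ℝ) = Measure.dirac (envMean Φ a)) :
    mse n π πD Φ (vLR n π πD) = ENNReal.ofReal (lrVariance π πD Φ / n) := by
  set c : Fin K → ℝ := fun a => π a / πD a * envMean Φ a - value π Φ
  have hc : ∑ a, πD a * c a = 0 := by
    simp only [c, mul_sub, ← mul_assoc, mul_div_cancel₀ _ (hπD.1 _).ne', Finset.sum_sub_distrib,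
      ← Finset.sum_mul, hπD.2, one_mul]
    simp [value]
  have hLR (f : Fin n → Fin K) :
      vLR n π πD (fun i => (f i, envMean Φ (f i))) - value π Φ = (∑ i, c (f i)) / n := by
    simp only [vLR, c, Finset.sum_sub_distrib, Finset.sum_const, Finset.card_univ,
      Fintype.card_fin, nsmul_eq_mul]
    field_simp
  rw [mse_eq_sum π (fun a => (hπD.1 a).le) hΦ]
  simp_rw [hLR, div_pow, ← mul_div_assoc]
  rw [← Finset.sum_div, sum_prod_mul_sum_sq hπD.2 hc, Fintype.card_fin,
    sum_mul_sq_sub_value_eq_lrVariance π hπD Φ]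
  congr 1
  field_simp

lemma lrVariance_self_le_one {π : Fin K → ℝ} (hπ : IsPolicy π) {Φ : Fin K → ProbabilityMeasure ℝ}
    (hΦ : ∀ a, 0 ≤ envMean Φ a ∧ envMean Φ a ≤ 1) : lrVariance π π Φ ≤ 1 := by
  have hterm (a : Fin K) : π a ^ 2 * envMean Φ a ^ 2 / π a ≤ π a := by
    have hm : envMean Φ a ^ 2 ≤ 1 := pow_le_one₀ (hΦ a).1 (hΦ a).2
    calc π a ^ 2 * envMean Φ a ^ 2 / π a = π a * envMean Φ a ^ 2 * (π a / π a) := by ring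
      _ ≤ π a * 1 * 1 := by
        have := hπ.1 a
        gcongr
        exact div_self_le_one _
      _ = π a := by ring
  have := Finset.sum_le_sum fun a (_ : a ∈ Finset.univ) => hterm a
  rw [hπ.2] at this
  unfold lrVariance
  nlinarith [sq_nonneg (value π Φ)]

lemma exp_neg_div_sub_one_le_one_sub_one_div_pow {x : ℝ} (hx : 1 < x) (m : ℕ) :
    Real.exp (-m / (x - 1)) ≤ (1 - 1 / x) ^ m := by
  have hbase : Real.exp (-(1 / (x - 1))) ≤ 1 - 1 / x := by
    have hx1 : 0 < x - 1 := sub_pos.2 hx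
    rw [Real.exp_neg, show 1 - 1 / x = (1 + 1 / (x - 1))⁻¹ by field_simp; ring]
    gcongr
    linarith [Real.add_one_le_exp (1 / (x - 1))]
  calc Real.exp (-m / (x - 1)) = Real.exp (-(1 / (x - 1))) ^ m := by
        rw [← Real.exp_nat_mul]; ring_nf
    _ ≤ (1 - 1 / x) ^ m := pow_le_pow_left₀ (Real.exp_nonneg _) hbase m

/-- construction in Theorem 2 (ii): for `K ≥ 2`, `π = π_D`
uniform and deterministic rewards `Φ(·|a) = δ_1` (so `r_Φ ≡ 1`, `σ²_Φ ≡ 0`,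
`v^π_Φ = 1`), for every `n ≥ 1`:
`MSE(v̂_Reg) ≥ (Σ_a π(a) p_{a,n})² = (1 − 1/K)^{2n} ≥ e^{−2n/(K−1)}`; moreover,
for every environment `Φ'` with `0 ≤ r_{Φ'} ≤ 1` and `σ²_{Φ'} = 0`,
`MSE(v̂_LR) = V₂/n` with `V₂ = Σ_a π(a)² r_{Φ'}(a)²/π_D(a) − (v^π_{Φ'})²`, and the
supremum of `MSE(v̂_LR)` over such environments is at most `1/n`. -/
theorem vReg_vs_vLR_uniform_deterministic {K : ℕ} (hK : 2 ≤ K) (n : ℕ) (hn : 1 ≤ n)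
    (π πD : Fin K → ℝ) (hπ : π = fun _ => 1 / (K : ℝ)) (hπD : πD = fun _ => 1 / (K : ℝ))
    (Φ : Fin K → ProbabilityMeasure ℝ)
    (hΦ : ∀ a, (Φ a : Measure ℝ) = Measure.dirac (1 : ℝ)) :
    (ENNReal.ofReal ((∑ a, π a * (1 - πD a) ^ n) ^ 2) ≤ mse n π πD Φ (vReg n π) ∧
      (∑ a, π a * (1 - πD a) ^ n) ^ 2 = (1 - 1 / (K : ℝ)) ^ (2 * n) ∧
      Real.exp (-2 * (n : ℝ) / ((K : ℝ) - 1)) ≤ (1 - 1 / (K : ℝ)) ^ (2 * n)) ∧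
    (∀ Φ' : Fin K → ProbabilityMeasure ℝ,
        (∀ a, MemLp (fun x => x) 2 (Φ' a : Measure ℝ)) →
        (∀ a, 0 ≤ envMean Φ' a ∧ envMean Φ' a ≤ 1) →
        (∀ a, envVar Φ' a = 0) →
        mse n π πD Φ' (vLR n π πD) =
          ENNReal.ofReal (((∑ a, π a ^ 2 * envMean Φ' a ^ 2 / πD a) - value π Φ' ^ 2) / n)) ∧
    (⨆ (Φ' : Fin K → ProbabilityMeasure ℝ)
        (_ : (∀ a, MemLp (fun x => x) 2 (Φ' a : Measure ℝ)) ∧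
          (∀ a, 0 ≤ envMean Φ' a ∧ envMean Φ' a ≤ 1) ∧ (∀ a, envVar Φ' a = 0)),
        mse n π πD Φ' (vLR n π πD)) ≤ ENNReal.ofReal (1 / (n : ℝ)) := by
  subst hπ hπD
  have hK0 : K ≠ 0 := by omega
  have hn0 : n ≠ 0 := by omega
  have hU := isBehaviorPolicy_uniform hK0
  refine ⟨⟨sq_sum_mul_one_sub_pow_le_mse_vReg hU.2 hU.isPolicy hΦ, ?_, ?_⟩,
    fun Φ' hL _ hv => mse_vLR_of_eq_dirac hn0 _ hU fun a =>
      eq_dirac_envMean_of_envVar_eq_zero (hL a) (hv a),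
    iSup₂_le fun Φ' ⟨hL, hm, hv⟩ => ?_⟩
  · simp [hK0, ← pow_mul, mul_comm n 2]
  · have hK1 : (1 : ℝ) < K := by exact_mod_cast hK
    simpa [neg_mul] using exp_neg_div_sub_one_le_one_sub_one_div_pow hK1 (2 * n)
  · rw [mse_vLR_of_eq_dirac hn0 _ hU fun a => eq_dirac_envMean_of_envVar_eq_zero (hL a) (hv a)]
    gcongr
    exact lrVariance_self_le_one hU.isPolicy hm

end OffPolicy
end
end
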